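/- arXiv:0904.4686 — 2 statements merged into one kernel-verified Lean document; each statement's English description precedes it below -/
import Mathlib

section
/- Lemma 1, unweighted product form: let M be a nondeterministic finite automaton over Σ with state set σ, and let x = x₁⋯xₙ ∈ Σ*. Define the product graph U with vertex set {0, 1, …, n} × σ and weighted edges: for each 0 ≤ i < n and state j, an edge (deletion) from (i, j) to (i+1, j) of weight c(x_{i+1}, ε); for each i and each transition of M from j to j' on symbol b ∈ Σ, an edge (insertion) from (i, j) to (i, j') of weight c(ε, b); and for each 0 ≤ i < n and each transition of M from j to j' on symbol b, an edge (substitution/match) from (i, j) to (i+1, j') of weight c(x_{i+1}, b). Then the infimum, over all directed walks in U from a vertex (0, j₀) with j₀ an initial state of M to a vertex (n, j_f) with j_f an accepting state of M, of the sum of the edge weights along the walk, equals the edit distance d(x, L(M)) = inf_{y ∈ L(M)} d(x, y) (both sides taken in [0, ∞]). -/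
open scoped ENNReal NNReal

/-- An edit operation over alphabet `α`: a pair in `(Σ ∪ {ε}) × (Σ ∪ {ε})`,
where `none` plays the role of `ε`.  The pair `(none, none)` is excluded
from `Ω` via the validity condition in `IsAlignment`. -/
abbrev EditOp (α : Type*) := Option α × Option α

/-- `ω` is an alignment between `x` and `y`: every letter of `ω` lies in
`Ω = (Σ ∪ {ε}) × (Σ ∪ {ε}) − {(ε,ε)}`, and the natural morphism `h`
(erasing `ε`'s componentwise) sends `ω` to `(x, y)`. -/
def IsAlignment {α : Type*} (ω : List (EditOp α)) (x y : List α) : Prop :=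
  (∀ p ∈ ω, p ≠ (none, none)) ∧
    ω.filterMap Prod.fst = x ∧ ω.filterMap Prod.snd = y

/-- The cost `c(ω) = Σᵢ c(ωᵢ)` of an alignment. -/
def alignCost {α : Type*} (c : EditOp α → ℝ≥0) (ω : List (EditOp α)) : ℝ≥0 :=
  (ω.map c).sum

/-- The edit-distance `d(x, y)`: the minimal cost of an alignment between
`x` and `y`. -/
noncomputable def editDist {α : Type*} (c : EditOp α → ℝ≥0) (x y : List α) : ℝ≥0 :=
  sInf {r : ℝ≥0 | ∃ ω : List (EditOp α), IsAlignment ω x y ∧ alignCost c ω = r}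

/-- The edit distance `d(x, L) = inf_{y ∈ L} d(x, y)` between a string and a
language, taken in `[0, ∞]` (so `d(x, ∅) = ∞`). -/
noncomputable def langDist {α : Type*} (c : EditOp α → ℝ≥0) (x : List α)
    (L : Set (List α)) : ℝ≥0∞ :=
  ⨅ y ∈ L, (editDist c x y : ℝ≥0∞)

/-- The weight of the walk `u, v₀, v₁, …` : the sum of the weights of its
consecutive edges (an empty walk has weight `0`). -/
noncomputable def walkWeight {V : Type*} (w : V → V → ℝ≥0∞) : V → List V → ℝ≥0∞
  | _, [] => 0
  | u, v :: vs => w u v + walkWeight w v vs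

/-- Edge weights of the product graph `U` of the string `x` and the NFA `M`:
from `(i, j)` to `(i+1, j)` a deletion edge of weight `c(x_{i+1}, ε)`; from
`(i, j)` to `(i, j')` an insertion edge of weight `c(ε, b)` for each
transition of `M` from `j` to `j'` on `b`; and from `(i, j)` to `(i+1, j')` a
substitution/match edge of weight `c(x_{i+1}, b)` for each such transition.
Parallel edges are merged by taking the infimum of their weights; absence of
any edge gives weight `∞`. -/
noncomputable def nfaEdgeWeight {α σ : Type*} (M : NFA α σ)
    (c : EditOp α → ℝ≥0) (x : List α) (p q : ℕ × σ) : ℝ≥0∞ :=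
  sInf
    ({t | ∃ hi : p.1 < x.length, q.1 = p.1 + 1 ∧ q.2 = p.2 ∧
        t = (c (some (x.get ⟨p.1, hi⟩), none) : ℝ≥0∞)} ∪
     {t | ∃ b : α, q.1 = p.1 ∧ q.2 ∈ M.step p.2 b ∧
        t = (c (none, some b) : ℝ≥0∞)} ∪
     {t | ∃ (b : α) (hi : p.1 < x.length), q.1 = p.1 + 1 ∧ q.2 ∈ M.step p.2 b ∧
        t = (c (some (x.get ⟨p.1, hi⟩), some b) : ℝ≥0∞)})

/-!
Walks in the product graph from `(i, j)` to an accepting vertex of the last row correspond to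
alignments of the suffix `x_{i+1} ⋯ x_n` with the language `L_j` that `M` accepts from `j`:
deletion, insertion and substitution edges are the three kinds of edit operations. Following an
alignment therefore traces a walk of no larger weight. Conversely, `φ(i, j) = d(x_{i+1} ⋯ x_n, L_j)`
satisfies `φ p ≤ w p q + φ q` along every edge and vanishes at accepting vertices of the last
row, so it bounds the weight of every such walk from below; this potential argument never has to
pick an edge realising the infimum that defines `w p q`.
-/

section EditDistance

variable {α : Type*}

theorem isAlignment_nil_iff {u y : List α} : IsAlignment [] u y ↔ u = [] ∧ y = [] := by
  simp [IsAlignment, eq_comm]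

theorem isAlignment_cons_iff {op : EditOp α} {ω : List (EditOp α)} {u y : List α} :
    IsAlignment (op :: ω) u y ↔ op ≠ (none, none) ∧
      ∃ u' y', IsAlignment ω u' y' ∧ u = op.1.toList ++ u' ∧ y = op.2.toList ++ y' := by
  obtain ⟨_ | a, _ | b⟩ := op <;> simp [IsAlignment, eq_comm]; tauto

theorem exists_isAlignment (u y : List α) : ∃ ω : List (EditOp α), IsAlignment ω u y := by
  induction u with
  | nil =>
    induction y with
    | nil => exact ⟨[], isAlignment_nil_iff.2 ⟨rfl, rfl⟩⟩
    | cons b y ih =>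
      obtain ⟨ω, hω⟩ := ih
      exact ⟨(none, some b) :: ω, isAlignment_cons_iff.2 ⟨by simp, _, _, hω, rfl, rfl⟩⟩
  | cons a u ih =>
    obtain ⟨ω, hω⟩ := ih
    exact ⟨(some a, none) :: ω, isAlignment_cons_iff.2 ⟨by simp, _, _, hω, rfl, rfl⟩⟩

variable (c : EditOp α → ℝ≥0)

theorem alignCost_cons (op : EditOp α) (ω : List (EditOp α)) :
    alignCost c (op :: ω) = c op + alignCost c ω := by
  simp [alignCost]

theorem coe_editDist (u y : List α) :
    (editDist c u y : ℝ≥0∞) = ⨅ (ω) (_ : IsAlignment ω u y), (alignCost c ω : ℝ≥0∞) := by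
  obtain ⟨ω₀, h₀⟩ := exists_isAlignment u y
  change ((sInf (alignCost c '' {ω | IsAlignment ω u y}) : ℝ≥0) : ℝ≥0∞) = _
  rw [ENNReal.coe_sInf (Set.Nonempty.image _ (s := {ω | IsAlignment ω u y}) ⟨ω₀, h₀⟩), iInf_image]
  rfl

theorem editDist_nil_nil : editDist c ([] : List α) [] = 0 :=
  le_antisymm (csInf_le' ⟨[], isAlignment_nil_iff.2 ⟨rfl, rfl⟩, rfl⟩) zero_le

theorem editDist_append_toList_le {op : EditOp α} (hop : op ≠ (none, none)) (u y : List α) :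
    (editDist c (op.1.toList ++ u) (op.2.toList ++ y) : ℝ≥0∞) ≤ c op + editDist c u y := by
  rw [coe_editDist, coe_editDist, ENNReal.add_iInf]
  refine le_iInf fun ω => ?_
  rw [ENNReal.add_iInf]
  refine le_iInf fun hω => ?_
  have hcons : IsAlignment (op :: ω) (op.1.toList ++ u) (op.2.toList ++ y) :=
    isAlignment_cons_iff.2 ⟨hop, u, y, hω, rfl, rfl⟩
  calc _ ≤ (alignCost c (op :: ω) : ℝ≥0∞) := iInf₂_le (op :: ω) hcons
    _ = c op + alignCost c ω := by rw [alignCost_cons, ENNReal.coe_add]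

theorem langDist_nil_eq_zero {L : Set (List α)} (hL : [] ∈ L) : langDist c [] L = 0 :=
  nonpos_iff_eq_zero.1 <| (iInf₂_le [] hL).trans_eq (by rw [editDist_nil_nil, ENNReal.coe_zero])

theorem langDist_append_toList_le {op : EditOp α} (hop : op ≠ (none, none)) (u : List α)
    {L L' : Set (List α)} (hL : ∀ y ∈ L', op.2.toList ++ y ∈ L) :
    langDist c (op.1.toList ++ u) L ≤ c op + langDist c u L' := by
  unfold langDist
  rw [ENNReal.add_iInf]
  refine le_iInf fun y => ?_
  rw [ENNReal.add_iInf]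
  exact le_iInf fun hy => (iInf₂_le _ (hL y hy)).trans (editDist_append_toList_le c hop u y)

end EditDistance

theorem le_walkWeight_add_getLast {V : Type*} {w : V → V → ℝ≥0∞} {φ : V → ℝ≥0∞}
    (hφ : ∀ p q, φ p ≤ w p q + φ q) (u : V) (vs : List V) :
    φ u ≤ walkWeight w u vs + φ ((u :: vs).getLast (List.cons_ne_nil _ _)) := by
  induction vs generalizing u with
  | nil => simp [walkWeight]
  | cons v vs ih =>
    rw [walkWeight, List.getLast_cons (List.cons_ne_nil _ _), add_assoc]
    exact (hφ u v).trans (add_le_add le_rfl (ih v))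

theorem List.exists_lt_length_of_drop_eq_cons {α : Type*} {x u : List α} {i : ℕ} {a : α}
    (h : x.drop i = a :: u) : ∃ hi : i < x.length, x[i] = a ∧ x.drop (i + 1) = u := by
  have hi : i < x.length := by
    by_contra hle
    simp [List.drop_eq_nil_of_le (not_lt.1 hle)] at h
  rw [List.drop_eq_getElem_cons hi] at h
  exact ⟨hi, List.cons.inj h⟩

namespace NFA

variable {α σ : Type*} (M : NFA α σ)

theorem mem_acceptsFrom_iff_exists {S : Set σ} {y : List α} :
    y ∈ M.acceptsFrom S ↔ ∃ j ∈ S, y ∈ M.acceptsFrom {j} := by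
  simp only [mem_acceptsFrom, mem_evalFrom_iff_exists (S := S)]
  aesop

theorem cons_mem_acceptsFrom_singleton {j : σ} {b : α} {y : List α} :
    b :: y ∈ M.acceptsFrom {j} ↔ ∃ j' ∈ M.step j b, y ∈ M.acceptsFrom {j'} := by
  rw [cons_mem_acceptsFrom, stepSet_singleton, mem_acceptsFrom_iff_exists]

end NFA

theorem langDist_acceptsFrom_eq_iInf {α σ : Type*} (M : NFA α σ) (c : EditOp α → ℝ≥0)
    (x : List α) (S : Set σ) :
    langDist c x (M.acceptsFrom S) = ⨅ j ∈ S, langDist c x (M.acceptsFrom {j}) := by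
  refine le_antisymm (le_iInf₂ fun j hj => le_iInf₂ fun y hy => ?_) (le_iInf₂ fun y hy => ?_)
  · exact iInf₂_le y ((M.mem_acceptsFrom_iff_exists).2 ⟨j, hj, hy⟩)
  · obtain ⟨j, hj, hy⟩ := (M.mem_acceptsFrom_iff_exists).1 hy
    exact iInf₂_le_of_le j hj (iInf₂_le y hy)

section ProductGraph

variable {α σ : Type*} (M : NFA α σ) (c : EditOp α → ℝ≥0) (x : List α)

theorem nfaEdgeWeight_deletion_le {i : ℕ} (j : σ) (hi : i < x.length) :
    nfaEdgeWeight M c x (i, j) (i + 1, j) ≤ c (some x[i], none) :=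
  sInf_le (Or.inl (Or.inl ⟨hi, rfl, rfl, rfl⟩))

theorem nfaEdgeWeight_insertion_le (i : ℕ) {j j' : σ} {b : α} (hstep : j' ∈ M.step j b) :
    nfaEdgeWeight M c x (i, j) (i, j') ≤ c (none, some b) :=
  sInf_le (Or.inl (Or.inr ⟨b, rfl, hstep, rfl⟩))

theorem nfaEdgeWeight_substitution_le {i : ℕ} {j j' : σ} {b : α} (hi : i < x.length)
    (hstep : j' ∈ M.step j b) :
    nfaEdgeWeight M c x (i, j) (i + 1, j') ≤ c (some x[i], some b) :=
  sInf_le (Or.inr ⟨b, hi, rfl, hstep, rfl⟩)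

theorem exists_edge_of_isAlignment_cons {op : EditOp α} {ω : List (EditOp α)} {i : ℕ} {j : σ}
    {y : List α} (hi : i ≤ x.length) (hω : IsAlignment (op :: ω) (x.drop i) y)
    (hy : y ∈ M.acceptsFrom {j}) :
    ∃ (q : ℕ × σ) (y' : List α), q.1 ≤ x.length ∧ nfaEdgeWeight M c x (i, j) q ≤ c op ∧
      IsAlignment ω (x.drop q.1) y' ∧ y' ∈ M.acceptsFrom {q.2} := by
  obtain ⟨hop, u, y', hω', hu, rfl⟩ := isAlignment_cons_iff.1 hω
  obtain ⟨_ | a, _ | b⟩ := op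
  · exact absurd rfl hop
  · obtain ⟨j', hstep, hy'⟩ := (M.cons_mem_acceptsFrom_singleton).1 hy
    obtain rfl : x.drop i = u := hu
    exact ⟨(i, j'), y', hi, nfaEdgeWeight_insertion_le M c x i hstep, hω', hy'⟩
  · obtain ⟨hlt, rfl, rfl⟩ := List.exists_lt_length_of_drop_eq_cons hu
    exact ⟨(i + 1, j), y', hlt, nfaEdgeWeight_deletion_le M c x j hlt, hω', hy⟩
  · obtain ⟨hlt, rfl, rfl⟩ := List.exists_lt_length_of_drop_eq_cons hu
    obtain ⟨j', hstep, hy'⟩ := (M.cons_mem_acceptsFrom_singleton).1 hy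
    exact ⟨(i + 1, j'), y', hlt, nfaEdgeWeight_substitution_le M c x hlt hstep, hω', hy'⟩

theorem exists_walk_of_isAlignment (ω : List (EditOp α)) {i : ℕ} {j : σ} {y : List α}
    (hi : i ≤ x.length) (hω : IsAlignment ω (x.drop i) y) (hy : y ∈ M.acceptsFrom {j}) :
    ∃ vs : List (ℕ × σ),
      (((i, j) :: vs).getLast (List.cons_ne_nil _ _)).1 = x.length ∧
      (((i, j) :: vs).getLast (List.cons_ne_nil _ _)).2 ∈ M.accept ∧
      walkWeight (nfaEdgeWeight M c x) (i, j) vs ≤ alignCost c ω := by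
  induction ω generalizing i j y with
  | nil =>
    obtain ⟨hdrop, rfl⟩ := isAlignment_nil_iff.1 hω
    obtain ⟨j', rfl, hacc⟩ := (M.nil_mem_acceptsFrom).1 hy
    exact ⟨[], le_antisymm hi (List.drop_eq_nil_iff.1 hdrop), hacc, zero_le⟩
  | cons op ω ih =>
    obtain ⟨q, y', hq, hedge, hω, hy⟩ := exists_edge_of_isAlignment_cons M c x hi hω hy
    obtain ⟨vs, hlen, hacc, hw⟩ := ih hq hω hy
    refine ⟨q :: vs, ?_, ?_, ?_⟩
    · rwa [List.getLast_cons (List.cons_ne_nil _ _)]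
    · rwa [List.getLast_cons (List.cons_ne_nil _ _)]
    · rw [walkWeight, alignCost_cons, ENNReal.coe_add]
      exact add_le_add hedge hw

theorem langDist_drop_le_nfaEdgeWeight_add (p q : ℕ × σ) :
    langDist c (x.drop p.1) (M.acceptsFrom {p.2}) ≤
      nfaEdgeWeight M c x p q + langDist c (x.drop q.1) (M.acceptsFrom {q.2}) := by
  obtain ⟨i, j⟩ := p
  obtain ⟨i', j'⟩ := q
  rw [nfaEdgeWeight, ENNReal.sInf_add]
  refine le_iInf₂ fun t ht => ?_
  simp only [Set.mem_union, Set.mem_ofPred_eq] at ht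
  rcases ht with (⟨hi, rfl, rfl, rfl⟩ | ⟨b, rfl, hstep, rfl⟩) | ⟨b, hi, rfl, hstep, rfl⟩
  · rw [List.drop_eq_getElem_cons hi]
    exact langDist_append_toList_le c (op := (some x[i], none)) (by simp) _ fun y hy => hy
  · exact langDist_append_toList_le c (op := (none, some b)) (by simp) _
      fun y hy => (M.cons_mem_acceptsFrom_singleton).2 ⟨j', hstep, hy⟩
  · rw [List.drop_eq_getElem_cons hi]
    exact langDist_append_toList_le c (op := (some x[i], some b)) (by simp) _
      fun y hy => (M.cons_mem_acceptsFrom_singleton).2 ⟨j', hstep, hy⟩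

theorem iInf_walkWeight_le_langDist {i : ℕ} (hi : i ≤ x.length) (j : σ) :
    ⨅ (vs : List (ℕ × σ))
        (_ : (((i, j) :: vs).getLast (List.cons_ne_nil _ _)).1 = x.length ∧
             (((i, j) :: vs).getLast (List.cons_ne_nil _ _)).2 ∈ M.accept),
        walkWeight (nfaEdgeWeight M c x) (i, j) vs ≤
      langDist c (x.drop i) (M.acceptsFrom {j}) := by
  refine le_iInf₂ fun y hy => ?_
  rw [coe_editDist]
  refine le_iInf₂ fun ω hω => ?_
  obtain ⟨vs, hlen, hacc, hw⟩ := exists_walk_of_isAlignment M c x ω hi hω hy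
  exact iInf₂_le_of_le vs ⟨hlen, hacc⟩ hw

theorem langDist_le_walkWeight {i : ℕ} {j : σ} {vs : List (ℕ × σ)}
    (hlen : (((i, j) :: vs).getLast (List.cons_ne_nil _ _)).1 = x.length)
    (hacc : (((i, j) :: vs).getLast (List.cons_ne_nil _ _)).2 ∈ M.accept) :
    langDist c (x.drop i) (M.acceptsFrom {j}) ≤ walkWeight (nfaEdgeWeight M c x) (i, j) vs := by
  have hend :
      langDist c [] (M.acceptsFrom {(((i, j) :: vs).getLast (List.cons_ne_nil _ _)).2}) = 0 :=
    langDist_nil_eq_zero c ((M.nil_mem_acceptsFrom).2 ⟨_, rfl, hacc⟩)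
  simpa [hlen, hend] using
    le_walkWeight_add_getLast (langDist_drop_le_nfaEdgeWeight_add M c x) (i, j) vs

end ProductGraph

theorem nfa_product_shortest_eq_editDist_general {α σ : Type*}
    (M : NFA α σ) (c : EditOp α → ℝ≥0) (x : List α) :
    (⨅ (j₀ : σ) (_ : j₀ ∈ M.start) (vs : List (ℕ × σ))
        (_ : (((0, j₀) :: vs).getLast (List.cons_ne_nil _ _)).1 = x.length ∧
             (((0, j₀) :: vs).getLast (List.cons_ne_nil _ _)).2 ∈ M.accept),
        walkWeight (nfaEdgeWeight M c x) (0, j₀) vs)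
    = langDist c x M.accepts := by
  rw [NFA.accepts_eq_acceptsFrom_start, langDist_acceptsFrom_eq_iInf]
  refine iInf_congr fun j₀ => iInf_congr fun _ => le_antisymm ?_ ?_
  · simpa using iInf_walkWeight_le_langDist M c x (Nat.zero_le _) j₀
  · exact le_iInf₂ fun vs ⟨hlen, hacc⟩ => by simpa using langDist_le_walkWeight M c x hlen hacc

/-- Lemma 1, unweighted product form: the infimum over all
directed walks in the product graph `U` from an initial vertex `(0, j₀)`,
`j₀ ∈ I`, to a vertex `(n, j_f)`, `j_f` accepting, of the total edge weight,
equals the edit distance `d(x, L(M))` (both sides in `[0, ∞]`). -/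
theorem nfa_product_shortest_eq_editDist {α σ : Type*} [Fintype α] [Fintype σ]
    (M : NFA α σ) (c : EditOp α → ℝ≥0) (x : List α) :
    (⨅ (j₀ : σ) (_ : j₀ ∈ M.start) (vs : List (ℕ × σ))
        (_ : (((0, j₀) :: vs).getLast (List.cons_ne_nil _ _)).1 = x.length ∧
             (((0, j₀) :: vs).getLast (List.cons_ne_nil _ _)).2 ∈ M.accept),
        walkWeight (nfaEdgeWeight M c x) (0, j₀) vs)
    = langDist c x M.accepts :=
  nfa_product_shortest_eq_editDist_general M c x
end

section
/- Correctness of the divide-and-conquer (Hirschberg) recursion: let M be a nondeterministic finite automaton over Σ with state set σ, let x¹, x² ∈ Σ*, and for q ∈ σ let L₁(q) be the set of strings by which M can reach q from an initial state and L₂(q) the set of strings by which M can reach an accepting state from q. Suppose q₀ ∈ σ attains the minimum of d(x¹, L₁(q)) + d(x², L₂(q)) over q ∈ σ, and suppose y¹ ∈ L₁(q₀) attains d(x¹, L₁(q₀)) and y² ∈ L₂(q₀) attains d(x², L₂(q₀)). Then y¹y² ∈ L(M) and d(x¹x², y¹y²) = d(x¹x², L(M)); that is, the concatenation of the two recursively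 optimal strings is a string of L(M) achieving the edit distance of x¹x² to L(M). -/
open scoped ENNReal NNReal

lemma alignment_exists {α : Type*} (x y : List α) :
    ∃ ω : List (EditOp α), IsAlignment ω x y := by
  refine ⟨x.map (fun a => (some a, none)) ++ y.map (fun b => (none, some b)), ?_, ?_, ?_⟩
  · intro p hp
    rcases List.mem_append.1 hp with h | h
    · simp only [List.mem_map] at h; obtain ⟨a, _, rfl⟩ := h; simp
    · simp only [List.mem_map] at h; obtain ⟨a, _, rfl⟩ := h; simp
  · simp [List.filterMap_append, List.filterMap_map, Function.comp_def]
  · simp [List.filterMap_append, List.filterMap_map, Function.comp_def]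

lemma editDist_coe {α : Type*} (c : EditOp α → ℝ≥0) (x y : List α) :
    (editDist c x y : ℝ≥0∞) =
      ⨅ ω : {ω : List (EditOp α) // IsAlignment ω x y}, (alignCost c ω.1 : ℝ≥0∞) := by
  obtain ⟨ω₀, hω₀⟩ := alignment_exists x y
  have hne : {r : ℝ≥0 | ∃ ω : List (EditOp α), IsAlignment ω x y ∧ alignCost c ω = r}.Nonempty :=
    ⟨alignCost c ω₀, ω₀, hω₀, rfl⟩
  rw [editDist, ENNReal.coe_sInf hne]
  apply le_antisymm
  · exact le_iInf fun w => iInf₂_le (alignCost c w.1) ⟨w.1, w.2, rfl⟩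
  · refine le_iInf₂ ?_
    rintro r ⟨ω, hω, rfl⟩
    exact iInf_le _ (⟨ω, hω⟩ : {ω : List (EditOp α) // IsAlignment ω x y})

lemma editDist_le {α : Type*} (c : EditOp α → ℝ≥0) {ω : List (EditOp α)} {x y : List α}
    (h : IsAlignment ω x y) : editDist c x y ≤ alignCost c ω :=
  csInf_le (OrderBot.bddBelow _) ⟨ω, h, rfl⟩

lemma isAlignment_append {α : Type*} {ω₁ ω₂ : List (EditOp α)} {x₁ x₂ y₁ y₂ : List α}
    (h₁ : IsAlignment ω₁ x₁ y₁) (h₂ : IsAlignment ω₂ x₂ y₂) :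
    IsAlignment (ω₁ ++ ω₂) (x₁ ++ x₂) (y₁ ++ y₂) := by
  obtain ⟨v₁, f₁, s₁⟩ := h₁; obtain ⟨v₂, f₂, s₂⟩ := h₂
  refine ⟨fun p hp => ?_, ?_, ?_⟩
  · rcases List.mem_append.1 hp with h | h
    exacts [v₁ p h, v₂ p h]
  · simp [List.filterMap_append, f₁, f₂]
  · simp [List.filterMap_append, s₁, s₂]

lemma alignCost_append {α : Type*} (c : EditOp α → ℝ≥0) (ω₁ ω₂ : List (EditOp α)) :
    alignCost c (ω₁ ++ ω₂) = alignCost c ω₁ + alignCost c ω₂ := by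
  simp [alignCost]

lemma split_align {α : Type*} :
    ∀ (ω : List (EditOp α)) (x₁ x₂ : List α), ω.filterMap Prod.fst = x₁ ++ x₂ →
      ∃ ω₁ ω₂, ω = ω₁ ++ ω₂ ∧ ω₁.filterMap Prod.fst = x₁ ∧ ω₂.filterMap Prod.fst = x₂ := by
  intro ω
  induction ω with
  | nil =>
    intro x₁ x₂ h
    simp only [List.filterMap_nil] at h
    obtain ⟨rfl, rfl⟩ := List.append_eq_nil_iff.1 h.symm
    exact ⟨[], [], rfl, rfl, rfl⟩
  | cons p ω ih =>
    intro x₁ x₂ h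
    match hp : p.1 with
    | none =>
      rw [List.filterMap_cons, hp] at h
      obtain ⟨ω₁, ω₂, rfl, h₁, h₂⟩ := ih x₁ x₂ h
      exact ⟨p :: ω₁, ω₂, rfl, by simp [List.filterMap_cons, hp, h₁], h₂⟩
    | some a =>
      rw [List.filterMap_cons, hp] at h
      match x₁ with
      | [] =>
        refine ⟨[], p :: ω, rfl, rfl, ?_⟩
        simpa [List.filterMap_cons, hp] using h
      | b :: x₁ =>
        simp only [List.cons_append, List.cons.injEq] at h
        obtain ⟨rfl, h'⟩ := h
        obtain ⟨ω₁, ω₂, rfl, h₁, h₂⟩ := ih x₁ x₂ h'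
        exact ⟨p :: ω₁, ω₂, rfl, by simp [List.filterMap_cons, hp, h₁], h₂⟩

lemma evalFrom_biUnion {α σ : Type*} (M : NFA α σ) :
    ∀ (y : List α) (S : Set σ), M.evalFrom S y = ⋃ q ∈ S, M.evalFrom {q} y := by
  intro y
  induction y with
  | nil => intro S; simp [NFA.evalFrom]
  | cons a y ih =>
    intro S
    show M.evalFrom (M.stepSet S a) y = ⋃ q ∈ S, M.evalFrom (M.stepSet {q} a) y
    rw [ih]
    have hstep : M.stepSet S a = ⋃ q ∈ S, M.step q a := rfl
    ext f
    simp only [Set.mem_iUnion, hstep]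
    constructor
    · rintro ⟨p, ⟨⟨q, ⟨hq, hp⟩⟩, hf⟩⟩
      refine ⟨q, hq, ?_⟩
      rw [ih (M.stepSet {q} a)]
      exact Set.mem_biUnion (by simpa [NFA.stepSet] using hp) hf
    · rintro ⟨q, hq, hf⟩
      rw [ih (M.stepSet {q} a)] at hf
      simp only [Set.mem_iUnion] at hf
      obtain ⟨p, hp, hf⟩ := hf
      exact ⟨p, ⟨⟨q, hq, by simpa [NFA.stepSet] using hp⟩, hf⟩⟩

lemma evalFrom_append' {α σ : Type*} (M : NFA α σ) (S : Set σ) (x y : List α) :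
    M.evalFrom S (x ++ y) = M.evalFrom (M.evalFrom S x) y :=
  List.foldl_append ..

lemma editDist_append_le {α : Type*} (c : EditOp α → ℝ≥0) (x₁ x₂ y₁ y₂ : List α) :
    (editDist c (x₁ ++ x₂) (y₁ ++ y₂) : ℝ≥0∞) ≤
      (editDist c x₁ y₁ : ℝ≥0∞) + editDist c x₂ y₂ := by
  rw [editDist_coe c x₁ y₁, editDist_coe c x₂ y₂, ENNReal.iInf_add]
  refine le_iInf fun w₁ => ?_
  rw [ENNReal.add_iInf]
  refine le_iInf fun w₂ => ?_
  calc (editDist c (x₁ ++ x₂) (y₁ ++ y₂) : ℝ≥0∞)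
      ≤ (alignCost c (w₁.1 ++ w₂.1) : ℝ≥0∞) := by
        exact_mod_cast editDist_le c (isAlignment_append w₁.2 w₂.2)
    _ = _ := by rw [alignCost_append]; push_cast; rfl


/-- correctness of the Hirschberg divide-and-conquer recursion:
with `L₁(q)` the strings by which `M` can reach `q` from an initial state and
`L₂(q)` the strings by which `M` can reach an accepting state from `q`, if
`q₀` minimizes `d(x¹, L₁(q)) + d(x², L₂(q))` over `q ∈ σ`, `y¹ ∈ L₁(q₀)`
attains `d(x¹, L₁(q₀))` and `y² ∈ L₂(q₀)` attains `d(x², L₂(q₀))`, then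
`y¹y² ∈ L(M)` and `d(x¹x², y¹y²) = d(x¹x², L(M))`. -/
theorem hirschberg_recursion_correct {α σ : Type*} [Fintype α] [Fintype σ]
    (M : NFA α σ) (c : EditOp α → ℝ≥0) (x₁ x₂ : List α) (q₀ : σ)
    (L₁ : σ → Set (List α)) (L₂ : σ → Set (List α))
    (hL₁ : ∀ q, L₁ q = {y : List α | q ∈ M.eval y})
    (hL₂ : ∀ q, L₂ q = {y : List α | ∃ f ∈ M.accept, f ∈ M.evalFrom {q} y})
    (hq₀ : ∀ q : σ,
      langDist c x₁ (L₁ q₀) + langDist c x₂ (L₂ q₀) ≤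
        langDist c x₁ (L₁ q) + langDist c x₂ (L₂ q))
    (y₁ : List α) (hy₁ : y₁ ∈ L₁ q₀)
    (hy₁opt : (editDist c x₁ y₁ : ℝ≥0∞) = langDist c x₁ (L₁ q₀))
    (y₂ : List α) (hy₂ : y₂ ∈ L₂ q₀)
    (hy₂opt : (editDist c x₂ y₂ : ℝ≥0∞) = langDist c x₂ (L₂ q₀)) :
    y₁ ++ y₂ ∈ M.accepts ∧
      (editDist c (x₁ ++ x₂) (y₁ ++ y₂) : ℝ≥0∞) =
        langDist c (x₁ ++ x₂) M.accepts := by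
  -- membership
  rw [hL₁] at hy₁
  rw [hL₂] at hy₂
  obtain ⟨f, hfacc, hf⟩ := hy₂
  have hmem : y₁ ++ y₂ ∈ M.accepts := by
    refine ⟨f, hfacc, ?_⟩
    show f ∈ M.evalFrom M.start (y₁ ++ y₂)
    rw [evalFrom_append', evalFrom_biUnion]
    exact Set.mem_biUnion hy₁ hf
  refine ⟨hmem, ?_⟩
  -- value V
  set V : ℝ≥0∞ := langDist c x₁ (L₁ q₀) + langDist c x₂ (L₂ q₀) with hV
  -- upper bound: langDist ≤ editDist(concat) ≤ V
  have hub : (editDist c (x₁ ++ x₂) (y₁ ++ y₂) : ℝ≥0∞) ≤ V := by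
    rw [hV, ← hy₁opt, ← hy₂opt]
    exact editDist_append_le c x₁ x₂ y₁ y₂
  have hlb : V ≤ langDist c (x₁ ++ x₂) M.accepts := by
    refine le_iInf₂ fun y hy => ?_
    rw [editDist_coe]
    refine le_iInf fun ⟨ω, hvalid, hfst, hsnd⟩ => ?_
    obtain ⟨ω₁, ω₂, rfl, h₁, h₂⟩ := split_align ω x₁ x₂ hfst
    rw [List.filterMap_append] at hsnd
    -- y = z₁ ++ z₂
    set z₁ := ω₁.filterMap Prod.snd with hz₁
    set z₂ := ω₂.filterMap Prod.snd with hz₂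
    obtain ⟨g, hgacc, hg⟩ := hy
    have hg' : g ∈ M.evalFrom M.start (z₁ ++ z₂) := by rw [hsnd]; exact hg
    rw [evalFrom_append', evalFrom_biUnion] at hg'
    obtain ⟨T, ⟨q, rfl⟩, hT⟩ := hg'
    simp only [Set.mem_iUnion, exists_prop] at hT
    obtain ⟨hq, hgq⟩ := hT
    have hz₁L : z₁ ∈ L₁ q := by rw [hL₁]; exact hq
    have hz₂L : z₂ ∈ L₂ q := by rw [hL₂]; exact ⟨g, hgacc, hgq⟩
    have hA₁ : IsAlignment ω₁ x₁ z₁ :=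
      ⟨fun p hp => hvalid p (List.mem_append_left _ hp), h₁, rfl⟩
    have hA₂ : IsAlignment ω₂ x₂ z₂ :=
      ⟨fun p hp => hvalid p (List.mem_append_right _ hp), h₂, rfl⟩
    calc V ≤ langDist c x₁ (L₁ q) + langDist c x₂ (L₂ q) := hq₀ q
      _ ≤ (editDist c x₁ z₁ : ℝ≥0∞) + (editDist c x₂ z₂ : ℝ≥0∞) := by
          gcongr
          · exact iInf₂_le z₁ hz₁L
          · exact iInf₂_le z₂ hz₂L
      _ ≤ (alignCost c ω₁ : ℝ≥0∞) + (alignCost c ω₂ : ℝ≥0∞) := by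
          gcongr
          · exact_mod_cast editDist_le c hA₁
          · exact_mod_cast editDist_le c hA₂
      _ = _ := by rw [alignCost_append]; push_cast; rfl
  have hld : langDist c (x₁ ++ x₂) M.accepts ≤
      (editDist c (x₁ ++ x₂) (y₁ ++ y₂) : ℝ≥0∞) := iInf₂_le _ hmem
  exact le_antisymm (hub.trans hlb) hld
end
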